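/- With N(m, n, λ) counting lattice paths in the m×n grid avoiding the removed Ferrers diagram of λ, for every integer ℓ ≥ 0 and partition λ, the sequence N(λ'_1 + i, λ_1 + ℓ − i, λ) for i = 0, 1, ..., ℓ is log-concave: N(λ'_1 + i − 1, λ_1 + ℓ − i + 1, λ) · N(λ'_1 + i + 1, λ_1 + ℓ − i − 1, λ) ≤ N(λ'_1 + i, λ_1 + ℓ − i, λ)^2 for 0 < i < ℓ. -/

import Mathlib

/-- A partition given as an antitone, eventually-zero function `ℕ → ℕ`
(0-indexed: `lam 0` is the largest part `λ₁`). -/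
def IsPartitionFun (lam : ℕ → ℕ) : Prop :=
  Antitone lam ∧ ∃ r : ℕ, ∀ i, r ≤ i → lam i = 0

/-- The conjugate partition: `conjPart lam j = #{i : lam i > j}` (0-indexed,
so `conjPart lam 0` is `λ'₁`, the number of nonzero parts). -/
noncomputable def conjPart (lam : ℕ → ℕ) (j : ℕ) : ℕ := Nat.card {i : ℕ // j < lam i}

/-- `latticeN m n lam` is the number of monotone lattice paths (unit up/right
steps) from the lower-left to the upper-right corner of the `m`-row,
`n`-column grid that never go inside the Ferrers diagram of `lam` removed
from the upper-left corner.  Such paths are in bijection with antitone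
sequences `μ : Fin m → {0,...,n}` (row `i` of the region weakly above-left of
the path) with `lam i ≤ μ i` for every row `i`. -/
def latticeN (m n : ℕ) (lam : ℕ → ℕ) : ℕ :=
  (Finset.univ.filter (fun mu : Fin m → Fin (n + 1) =>
    (∀ i j : Fin m, i ≤ j → mu j ≤ mu i) ∧ ∀ i : Fin m, lam i ≤ (mu i : ℕ))).card

/-!
Write `N(m, n)` for `latticeN m n lam`. With `m ≥ λ'₁` (so row `m` of the diagram is empty) the
theorem is the chain
`N(m, n + 2) N(m + 2, n) ≤ N(m + 1, n) N(m + 1, n + 2) ≤ N(m + 1, n + 1) ^ 2`.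

The first inequality is an injection. Put an extra full row of width `n + 2` on top of a path
`f` of the `m × (n + 2)` grid; the result and a path `g` of the `(m + 2) × n` grid share a
vertex, and exchanging their tails below the last common vertex gives a path of the
`(m + 1) × n` grid and one of the `(m + 2) × (n + 2)` grid that starts with a full row, i.e. a
path of the `(m + 1) × (n + 2)` grid. The exchange is an involution, so the map is injective.

The second says that `n ↦ N(m, n)` is log-concave for `n ≥ λ₁`. Sorting paths by the length
`v` of their first row gives `N(m + 1, n) = ∑_{λ₁ ≤ v ≤ n} N'(m, v)`, where `N'` belongs to
`λ` without its first part, and partial sums of a log-concave sequence are log-concave in the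
ratio form; induct on `m`.
-/

open Finset

section Splice

variable {α : Type*}

def consSeq (a : α) (f : ℕ → α) : ℕ → α
  | 0 => a
  | i + 1 => f i

@[simp] lemma consSeq_succ (a : α) (f : ℕ → α) (i : ℕ) : consSeq a f (i + 1) = f i := rfl

lemma consSeq_eq_self {a : α} {f : ℕ → α} (h : f 0 = a) : consSeq a (fun i => f (i + 1)) = f := by
  subst h; funext i; cases i <;> rfl

def splice (K : ℕ) (u v : ℕ → α) (i : ℕ) : α := if i < K then u i else v i

variable {K i : ℕ} {u v : ℕ → α}

lemma splice_of_lt (h : i < K) : splice K u v i = u i := if_pos h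

lemma splice_of_le (h : K ≤ i) : splice K u v i = v i := if_neg (not_lt.2 h)

lemma splice_splice_splice (K : ℕ) (u v w x : ℕ → α) :
    splice K (splice K u v) (splice K w x) = splice K u x := by
  funext i; unfold splice; split_ifs <;> rfl

lemma splice_self (K : ℕ) (u : ℕ → α) : splice K u u = u := by
  funext i; unfold splice; split_ifs <;> rfl

section Preorder

variable [Preorder α]

lemma antitone_consSeq {a : α} {f : ℕ → α} (hf : Antitone f) (ha : f 0 ≤ a) :
    Antitone (consSeq a f) :=
  antitone_nat_of_succ_le fun i => by cases i; exacts [ha, hf (Nat.le_succ _)]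

lemma antitone_splice (hu : Antitone u) (hv : Antitone v) (h : v K ≤ u (K - 1)) :
    Antitone (splice K u v) := by
  refine antitone_nat_of_succ_le fun i => ?_
  rcases lt_trichotomy (i + 1) K with hi | hi | hi
  · rw [splice_of_lt hi, splice_of_lt (by omega)]; exact hu (Nat.le_succ i)
  · rw [splice_of_le hi.ge, splice_of_lt (by omega)]; subst hi; simpa using h
  · rw [splice_of_le hi.le, splice_of_le (by omega)]; exact hv (Nat.le_succ i)

end Preorder

variable [LinearOrder α]

/-- Splicing `u` and `v` at `j`, either way round, keeps antitone sequences antitone; for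
lattice paths this says that the two paths share a vertex between rows `j - 1` and `j`. -/
def Touch (u v : ℕ → α) (j : ℕ) : Prop := 0 < j ∧ v j ≤ u (j - 1) ∧ u j ≤ v (j - 1)

instance (u v : ℕ → α) : DecidablePred (Touch u v) :=
  fun _ => inferInstanceAs (Decidable (_ ∧ _ ∧ _))

lemma touch_comm {j : ℕ} : Touch u v j ↔ Touch v u j := by
  unfold Touch; tauto

def lastTouch (p : ℕ) (u v : ℕ → α) : ℕ := Nat.findGreatest (Touch u v) p

def swapTails (p : ℕ) (x : (ℕ → α) × (ℕ → α)) : (ℕ → α) × (ℕ → α) :=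
  (splice (lastTouch p x.1 x.2) x.1 x.2, splice (lastTouch p x.1 x.2) x.2 x.1)

lemma touch_splice_iff (hu : Antitone u) (hv : Antitone v) (hK : K = 0 ∨ Touch u v K)
    (j : ℕ) : Touch (splice K u v) (splice K v u) j ↔ Touch u v j := by
  rcases lt_trichotomy j K with hj | rfl | hj
  · simp only [Touch, splice_of_lt hj, splice_of_lt (lt_of_le_of_lt (Nat.sub_le j 1) hj)]
  · rcases hK with rfl | hK
    · simp [Touch]
    · simp only [Touch, splice_of_le le_rfl, splice_of_lt (Nat.sub_lt hK.1 one_pos)]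
      exact iff_of_true ⟨hK.1, hu (Nat.sub_le _ _), hv (Nat.sub_le _ _)⟩ hK
  · simp only [Touch, splice_of_le hj.le, splice_of_le (Nat.le_sub_one_of_lt hj)]
    exact touch_comm

lemma lastTouch_swapTails (hu : Antitone u) (hv : Antitone v) (p : ℕ) :
    lastTouch p (swapTails p (u, v)).1 (swapTails p (u, v)).2 = lastTouch p u v := by
  have hK : lastTouch p u v = 0 ∨ Touch u v (lastTouch p u v) :=
    or_iff_not_imp_left.2 (Nat.findGreatest_of_ne_zero rfl)
  exact le_antisymm (Nat.findGreatest_mono_left (fun j => (touch_splice_iff hu hv hK j).1) p)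
    (Nat.findGreatest_mono_left (fun j => (touch_splice_iff hu hv hK j).2) p)

lemma swapTails_swapTails (hu : Antitone u) (hv : Antitone v) (p : ℕ) :
    swapTails p (swapTails p (u, v)) = (u, v) := by
  have hK := lastTouch_swapTails hu hv p
  simp only [swapTails] at hK ⊢
  rw [hK, splice_splice_splice, splice_splice_splice, splice_self, splice_self]

lemma lt_of_forall_not_touch {p j : ℕ} (hu : Antitone u) (hp : v p ≤ u (p - 1)) (hj : 0 < j)
    (hjp : j ≤ p) (hno : ∀ k, j ≤ k → k ≤ p → ¬Touch u v k) : v (j - 1) < u j := by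
  obtain ⟨d, rfl⟩ := Nat.exists_eq_add_of_le hjp
  induction d generalizing j with
  | zero => exact lt_of_not_ge fun h => hno j le_rfl le_rfl ⟨hj, hp, h⟩
  | succ d ih =>
    have hnext : v j < u (j + 1) :=
      ih (j := j + 1) (by omega) (by rwa [show j + 1 + d = j + (d + 1) by omega]) (by omega)
        (fun k hk hkp => hno k (by omega) (by omega))
    refine lt_of_not_ge fun h => hno j le_rfl (by omega) ⟨hj, ?_, h⟩
    exact hnext.le.trans (hu (by omega))

lemma lt_of_lastTouch_lt {p j : ℕ} (hu : Antitone u) (hp : v p ≤ u (p - 1))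
    (hj : lastTouch p u v < j) (hjp : j ≤ p) : v (j - 1) < u j :=
  lt_of_forall_not_touch hu hp (by omega) hjp fun _ hk hkp =>
    Nat.findGreatest_is_greatest (by unfold lastTouch at hj; omega) hkp

lemma lastTouch_pos {p : ℕ} (hu : Antitone u) (hp : v p ≤ u (p - 1)) (hp₀ : 0 < p)
    (h₁ : u 1 ≤ v 0) : 0 < lastTouch p u v :=
  Nat.pos_of_ne_zero fun h => (lt_of_lastTouch_lt hu hp (by omega) hp₀).not_ge h₁

lemma touch_lastTouch {p : ℕ} (h : 0 < lastTouch p u v) : Touch u v (lastTouch p u v) :=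
  Nat.findGreatest_of_ne_zero rfl h.ne'

end Splice

/-- Log-concavity on `[L, ∞)` in ratio form (`F (n + 1) / F n` antitone); unlike the local form
`F (n - 1) * F (n + 1) ≤ F n ^ 2` it passes to partial sums even when `F` has internal zeros. -/
def LogConcaveFrom (L : ℕ) (F : ℕ → ℕ) : Prop :=
  ∀ a b, L ≤ a → a ≤ b → F a * F (b + 1) ≤ F (a + 1) * F b

namespace LogConcaveFrom

variable {L : ℕ} {F : ℕ → ℕ}

lemma mono {L' : ℕ} (h : LogConcaveFrom L F) (hL : L ≤ L') : LogConcaveFrom L' F :=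
  fun a b ha hab => h a b (hL.trans ha) hab

lemma mul_le_mul_of_add_eq (h : LogConcaveFrom L F) {x y x' y' : ℕ} (hx : L ≤ x)
    (hxx' : x ≤ x') (hxy' : x ≤ y') (hsum : x + y = x' + y') : F x * F y ≤ F x' * F y' := by
  wlog hle : x' ≤ y' generalizing x' y'
  · rw [mul_comm (F x')]; exact this hxy' hxx' (by omega) (by omega)
  induction x', hxx' using Nat.le_induction generalizing y' with
  | base =>
    obtain rfl : y = y' := by omega
    exact le_rfl
  | succ x' hxx' ih =>
    calc F x * F y ≤ F x' * F (y' + 1) := ih (by omega) (by omega) (by omega)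
      _ ≤ F (x' + 1) * F y' := h x' y' (hx.trans hxx') (by omega)

lemma sum_Icc (h : LogConcaveFrom L F) : LogConcaveFrom L fun n => ∑ v ∈ Icc L n, F v := by
  intro a b ha hab
  have hterm : ∀ v ∈ Icc L a, F v * F (b + 1) ≤ F (a + 1) * F (v + (b - a)) := fun v hv =>
    h.mul_le_mul_of_add_eq (mem_Icc.1 hv).1 (by simp at hv; omega) (by omega) (by omega)
  have hshift : ∑ v ∈ Icc L a, F (v + (b - a)) ≤ ∑ v ∈ Icc L b, F v := by
    have := sum_map (Icc L a) (addRightEmbedding (b - a)) F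
    simp only [addRightEmbedding_apply, map_add_right_Icc] at this
    rw [← this]
    exact sum_le_sum_of_subset (Icc_subset_Icc (by omega) (by omega))
  have key : (∑ v ∈ Icc L a, F v) * F (b + 1) ≤ F (a + 1) * ∑ v ∈ Icc L b, F v :=
    calc (∑ v ∈ Icc L a, F v) * F (b + 1) ≤ ∑ v ∈ Icc L a, F (a + 1) * F (v + (b - a)) := by
          rw [sum_mul]; exact sum_le_sum hterm
      _ ≤ F (a + 1) * ∑ v ∈ Icc L b, F v := by rw [← mul_sum]; exact Nat.mul_le_mul_left _ hshift
  simp only [sum_Icc_succ_top (by omega : L ≤ a + 1), sum_Icc_succ_top (by omega : L ≤ b + 1)]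
  linarith [key]

end LogConcaveFrom

/-- `f i` is the length of row `i` of the region above-left of a path, extended by zero below
row `m`, so that profiles of paths in grids of different heights live in one type. -/
structure IsPathProfile (m n : ℕ) (lam f : ℕ → ℕ) : Prop where
  antitone : Antitone f
  le_width : ∀ i, f i ≤ n
  lam_le : ∀ i < m, lam i ≤ f i
  eq_zero : ∀ i, m ≤ i → f i = 0

open Classical in
noncomputable def pathProfiles (m n : ℕ) (lam : ℕ → ℕ) : Finset (ℕ → ℕ) :=
  (univ.filter (fun mu : Fin m → Fin (n + 1) =>
    (∀ i j : Fin m, i ≤ j → mu j ≤ mu i) ∧ ∀ i : Fin m, lam i ≤ (mu i : ℕ))).image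
    fun mu i => if h : i < m then (mu ⟨i, h⟩ : ℕ) else 0

section PathProfiles

variable {m n a : ℕ} {lam f : ℕ → ℕ}

lemma mem_pathProfiles : f ∈ pathProfiles m n lam ↔ IsPathProfile m n lam f := by
  simp only [pathProfiles, mem_image, mem_filter, mem_univ, true_and]
  constructor
  · rintro ⟨mu, ⟨hmu, hlam⟩, rfl⟩
    refine ⟨fun i j hij => ?_, fun i => ?_, fun i hi => by simpa [hi] using hlam ⟨i, hi⟩,
      fun i hi => by simp [not_lt.2 hi]⟩
    · by_cases hj : j < m
      · simpa [hj, hij.trans_lt hj] using hmu ⟨i, hij.trans_lt hj⟩ ⟨j, hj⟩ hij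
      · simp [hj]
    · split_ifs
      exacts [Nat.lt_succ_iff.1 (Fin.is_lt _), Nat.zero_le n]
  · intro hf
    refine ⟨fun i => ⟨f i, Nat.lt_succ_of_le (hf.le_width i)⟩,
      ⟨fun i j hij => hf.antitone hij, fun i => hf.lam_le i i.2⟩, funext fun i => ?_⟩
    by_cases hi : i < m
    · simp [hi]
    · simp [hi, hf.eq_zero i (not_lt.1 hi)]

lemma card_pathProfiles (m n : ℕ) (lam : ℕ → ℕ) : #(pathProfiles m n lam) = latticeN m n lam := by
  classical
  rw [pathProfiles, latticeN, card_image_of_injective]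
  intro mu nu h
  funext i
  simpa [Fin.ext_iff] using congrFun h i

lemma isPathProfile_consSeq_iff :
    IsPathProfile (m + 1) n lam (consSeq a f) ↔
      lam 0 ≤ a ∧ a ≤ n ∧ IsPathProfile m a (fun i => lam (i + 1)) f := by
  constructor
  · intro h
    refine ⟨h.lam_le 0 m.succ_pos, h.le_width 0,
      fun i j hij => h.antitone (by omega : i + 1 ≤ j + 1), fun i => h.antitone (Nat.zero_le (i + 1)), fun i hi => h.lam_le (i + 1) (by omega),
      fun i hi => h.eq_zero (i + 1) (by omega)⟩
  · rintro ⟨ha, han, hf⟩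
    refine ⟨antitone_nat_of_succ_le fun i => ?_, fun i => ?_, fun i hi => ?_, fun i hi => ?_⟩
    · cases i
      exacts [hf.le_width 0, hf.antitone (Nat.le_succ _)]
    · cases i
      exacts [han, (hf.le_width _).trans han]
    · cases i
      exacts [ha, hf.lam_le _ (by omega)]
    · cases i
      · omega
      · exact hf.eq_zero _ (by omega)

lemma latticeN_zero (n : ℕ) (lam : ℕ → ℕ) : latticeN 0 n lam = 1 := by
  simp [latticeN]

lemma latticeN_succ (m n : ℕ) (lam : ℕ → ℕ) :
    latticeN (m + 1) n lam = ∑ v ∈ Icc (lam 0) n, latticeN m v (fun i => lam (i + 1)) := by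
  classical
  rw [← card_pathProfiles, card_eq_sum_card_fiberwise (f := fun f => f 0) (t := Icc (lam 0) n)]
  · refine sum_congr rfl fun v hv => ?_
    rw [← card_pathProfiles]
    refine card_nbij' (fun f i => f (i + 1)) (consSeq v) (fun f hf => ?_) (fun g hg => ?_)
      (fun f hf => ?_) (fun g _ => rfl)
    · simp only [coe_filter, Set.mem_ofPred_eq, mem_coe, mem_pathProfiles] at hf ⊢
      obtain ⟨hf, hv⟩ := hf
      rw [← consSeq_eq_self hv] at hf
      exact (isPathProfile_consSeq_iff.1 hf).2.2
    · simp only [mem_coe, mem_pathProfiles, coe_filter, Set.mem_ofPred_eq, mem_Icc] at hg hv ⊢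
      exact ⟨isPathProfile_consSeq_iff.2 ⟨hv.1, hv.2, hg⟩, rfl⟩
    · simp only [coe_filter, Set.mem_ofPred_eq] at hf
      exact consSeq_eq_self hf.2
  · intro f hf
    rw [mem_coe, mem_pathProfiles] at hf
    exact mem_Icc.2 ⟨hf.lam_le 0 m.succ_pos, hf.le_width 0⟩

lemma logConcaveFrom_latticeN (hlam : Antitone lam) :
    LogConcaveFrom (lam 0) fun n => latticeN m n lam := by
  induction m generalizing lam with
  | zero => intro a b _ _; simp [latticeN_zero]
  | succ m ih =>
    simp only [latticeN_succ]
    exact ((ih fun i j hij => hlam (by omega : i + 1 ≤ j + 1)).mono (hlam (Nat.zero_le 1))).sum_Icc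

end PathProfiles

section Swap

variable {lam f g : ℕ → ℕ} {m n₁ n₂ : ℕ}

lemma lastTouch_pos_of_isPathProfile (hf : IsPathProfile m n₂ lam f)
    (hg : IsPathProfile (m + 2) n₁ lam g) (h : n₁ ≤ n₂) :
    0 < lastTouch (m + 1) g (consSeq n₂ f) :=
  lastTouch_pos hg.antitone (by simp [hf.eq_zero m le_rfl]) m.succ_pos ((hg.le_width 1).trans h)

lemma isPathProfile_swapTails_fst (hlam : Antitone lam) (hf : IsPathProfile m n₂ lam f)
    (hg : IsPathProfile (m + 2) n₁ lam g) (h : n₁ ≤ n₂) :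
    IsPathProfile (m + 1) n₁ lam (swapTails (m + 1) (g, consSeq n₂ f)).1 := by
  have hpos := lastTouch_pos_of_isPathProfile hf hg h
  have hle : lastTouch (m + 1) g (consSeq n₂ f) ≤ m + 1 := Nat.findGreatest_le _
  have hT := antitone_splice hg.antitone (antitone_consSeq hf.antitone (hf.le_width 0))
    (touch_lastTouch hpos).2.1
  simp only [swapTails]
  set K := lastTouch (m + 1) g (consSeq n₂ f)
  refine ⟨hT, fun i => (hT (Nat.zero_le i)).trans ?_, fun i hi => ?_, fun i hi => ?_⟩
  · rw [splice_of_lt hpos]; exact hg.le_width 0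
  · rcases lt_or_ge i K with hiK | hiK
    · rw [splice_of_lt hiK]; exact hg.lam_le i (by omega)
    · obtain ⟨i, rfl⟩ : ∃ i', i = i' + 1 := ⟨i - 1, by omega⟩
      rw [splice_of_le hiK, consSeq_succ]
      exact (hlam (Nat.le_succ i)).trans (hf.lam_le i (by omega))
  · obtain ⟨i, rfl⟩ : ∃ i', i = i' + 1 := ⟨i - 1, by omega⟩
    rw [splice_of_le (by omega), consSeq_succ]
    exact hf.eq_zero i (by omega)

lemma swapTails_snd_zero (hf : IsPathProfile m n₂ lam f) (hg : IsPathProfile (m + 2) n₁ lam g)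
    (h : n₁ ≤ n₂) : (swapTails (m + 1) (g, consSeq n₂ f)).2 0 = n₂ :=
  splice_of_lt (lastTouch_pos_of_isPathProfile hf hg h)

lemma isPathProfile_swapTails_snd (hz : lam m = 0)
    (hf : IsPathProfile m n₂ lam f) (hg : IsPathProfile (m + 2) n₁ lam g) (h : n₁ ≤ n₂) :
    IsPathProfile (m + 1) n₂ lam fun i => (swapTails (m + 1) (g, consSeq n₂ f)).2 (i + 1) := by
  have hpos := lastTouch_pos_of_isPathProfile hf hg h
  have hle : lastTouch (m + 1) g (consSeq n₂ f) ≤ m + 1 := Nat.findGreatest_le _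
  have hS := antitone_splice (antitone_consSeq hf.antitone (hf.le_width 0)) hg.antitone
    (touch_lastTouch hpos).2.2
  -- below the last common vertex `g` is strictly right of the lowered `f`, so outside the diagram
  have hright : ∀ j, lastTouch (m + 1) g (consSeq n₂ f) < j → j ≤ m + 1 →
      consSeq n₂ f (j - 1) < g j :=
    fun j => lt_of_lastTouch_lt hg.antitone (by simp [hf.eq_zero m le_rfl])
  have hzero := swapTails_snd_zero hf hg h
  simp only [swapTails] at hzero ⊢
  set K := lastTouch (m + 1) g (consSeq n₂ f)
  refine ⟨fun i j hij => hS (by omega : i + 1 ≤ j + 1), fun i => hzero ▸ hS (Nat.zero_le _),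
    fun i hi => ?_, fun i hi => ?_⟩
  · rcases lt_or_ge (i + 1) K with hiK | hiK
    · rw [splice_of_lt hiK, consSeq_succ]; exact hf.lam_le i (by omega)
    · rw [splice_of_le hiK]
      rcases (Nat.lt_succ_iff.1 hi).eq_or_lt with rfl | him
      · rw [hz]; exact Nat.zero_le _
      · have : f i < g (i + 2) := hright (i + 2) (by omega) (by omega)
        exact (hf.lam_le i him).trans (this.le.trans (hg.antitone (Nat.le_succ _)))
  · rw [splice_of_le (by omega)]; exact hg.eq_zero _ (by omega)

theorem latticeN_mul_latticeN_le (hlam : Antitone lam) (hz : lam m = 0) (h : n₁ ≤ n₂) :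
    latticeN m n₂ lam * latticeN (m + 2) n₁ lam ≤
      latticeN (m + 1) n₁ lam * latticeN (m + 1) n₂ lam := by
  simp only [← card_pathProfiles, ← card_product]
  let cross : (ℕ → ℕ) × (ℕ → ℕ) → (ℕ → ℕ) × (ℕ → ℕ) := fun x =>
    let y := swapTails (m + 1) (x.2, consSeq n₂ x.1)
    (y.1, fun i => y.2 (i + 1))
  let uncross : (ℕ → ℕ) × (ℕ → ℕ) → (ℕ → ℕ) × (ℕ → ℕ) := fun x =>
    let y := swapTails (m + 1) (x.1, consSeq n₂ x.2)
    (fun i => y.2 (i + 1), y.1)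
  refine card_le_card_of_injOn cross (fun x hx => ?_)
    (Set.LeftInvOn.injOn (f₁' := uncross) fun x hx => ?_)
  · simp only [coe_product, Set.mem_prod, mem_coe, mem_pathProfiles] at hx ⊢
    exact ⟨isPathProfile_swapTails_fst hlam hx.1 hx.2 h,
      isPathProfile_swapTails_snd hz hx.1 hx.2 h⟩
  · obtain ⟨f, g⟩ := x
    simp only [coe_product, Set.mem_prod, mem_coe, mem_pathProfiles] at hx
    have hcons : consSeq n₂ (fun i => (swapTails (m + 1) (g, consSeq n₂ f)).2 (i + 1)) =
        (swapTails (m + 1) (g, consSeq n₂ f)).2 :=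
      consSeq_eq_self (swapTails_snd_zero hx.1 hx.2 h)
    simp only [cross, uncross, hcons, Prod.mk.eta,
      swapTails_swapTails hx.2.antitone (antitone_consSeq hx.1.antitone (hx.1.le_width 0))]
    rfl

end Swap

lemma IsPartitionFun.eq_zero_of_conjPart_le {lam : ℕ → ℕ} (hlam : IsPartitionFun lam) {j : ℕ}
    (hj : conjPart lam 0 ≤ j) : lam j = 0 := by
  obtain ⟨r, hr⟩ := hlam.2
  by_contra hne
  have hsub : Set.Iic j ⊆ {i | 0 < lam i} := fun i hi =>
    (Nat.pos_of_ne_zero hne).trans_le (hlam.1 hi)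
  have hfin : {i | 0 < lam i}.Finite :=
    (Set.finite_Iio r).subset fun i hi => not_le.1 fun hir => (hr i hir ▸ hi : 0 < 0).false
  have := Set.ncard_le_ncard hsub hfin
  rw [Set.ncard_Iic_nat] at this
  change Set.ncard {i | 0 < lam i} ≤ j at hj
  omega

/-- Hildebrand's theorem: for every ℓ ≥ 0 the sequence
i ↦ N(λ'₁ + i, λ₁ + ℓ − i, λ), 0 ≤ i ≤ ℓ, is log-concave. -/
theorem hildebrand (lam : ℕ → ℕ) (hlam : IsPartitionFun lam) (ℓ : ℕ) :
    ∀ i, 0 < i → i < ℓ →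
      latticeN (conjPart lam 0 + i - 1) (lam 0 + ℓ - i + 1) lam *
        latticeN (conjPart lam 0 + i + 1) (lam 0 + ℓ - i - 1) lam ≤
      latticeN (conjPart lam 0 + i) (lam 0 + ℓ - i) lam ^ 2 := by
  intro i hi hiℓ
  obtain ⟨m, hm⟩ : ∃ m, conjPart lam 0 + i = m + 1 := ⟨conjPart lam 0 + i - 1, by omega⟩
  obtain ⟨n, hn⟩ : ∃ n, lam 0 + ℓ - i = n + 1 := ⟨lam 0 + ℓ - i - 1, by omega⟩
  rw [hm, hn, Nat.add_sub_cancel, Nat.add_sub_cancel]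
  calc latticeN m (n + 2) lam * latticeN (m + 2) n lam
      ≤ latticeN (m + 1) n lam * latticeN (m + 1) (n + 2) lam :=
        latticeN_mul_latticeN_le hlam.1 (hlam.eq_zero_of_conjPart_le (by omega)) (by omega)
    _ ≤ latticeN (m + 1) (n + 1) lam ^ 2 := by
        rw [sq]; exact logConcaveFrom_latticeN hlam.1 n (n + 1) (by omega) (Nat.le_succ n)
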